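/- arXiv:2309.08502 — 2 statements merged into one kernel-verified Lean document; each statement's English description precedes it below -/
import Mathlib

section
/- For integers k ≥ m ≥ 2, a prime p, and a positive integer d with p ≥ 1 + d, the polynomial F_4 = (z - p) + (z - p)^2 + ... + (z - p)^{m-1} ± (p^{2k-2} d) z^m is irreducible in ℤ[z]. -/
/-!
Every complex root of `F₄` lies in the open unit disc: for `|z| ≥ 1` the term `p^(2k-2) d z^m`
dominates, since `∑_{1 ≤ j < m} (1 + p)^j < p^(2m-2)`. Reducing mod `p` kills that term and
leaves a polynomial of degree `m - 1`, so in a factorisation `F₄ = g h` into nonconstant factors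
(constant factors are units, the coefficient of `z^(m-1)` being `1`) one factor `g` has leading
coefficient prime to `p`; as it divides `± p^(2k-2) d`, we get `|lc g| ≤ d < p`. Since the roots
of `g` lie in the unit disc and `g(0) ∣ F₄(0) ≠ 0`, we get `0 < |g(0)| < |lc g| < p`, hence
`p ∤ g(0)` and so `p ∤ g(p)`. Then `g(p) ∣ F₄(p) = ± p^(2k-2+m) d` forces `|g(p)| ≤ d`, while
`|g(p)| > |lc g| (p - 1)^(deg g) ≥ p - 1`.
-/

open Polynomial Finset

theorem sum_Icc_pow_eq_mul_geom_sum {R : Type*} [Semiring R] (x : R) (n : ℕ) :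
    ∑ j ∈ Icc 1 n, x ^ j = x * ∑ j ∈ range n, x ^ j := by
  induction n with
  | zero => simp
  | succ n ih => rw [sum_Icc_succ_top (by omega), ih, sum_range_succ, mul_add, pow_succ']

theorem sum_Icc_pow_ne_zero {R : Type*} [Ring R] [LinearOrder R] [IsStrictOrderedRing R]
    {x : R} (hx0 : x ≠ 0) (hx1 : x ≠ -1) {n : ℕ} (hn : n ≠ 0) : ∑ j ∈ Icc 1 n, x ^ j ≠ 0 := by
  rw [sum_Icc_pow_eq_mul_geom_sum]
  exact mul_ne_zero hx0 (geom_sum_ne_zero hx1 hn)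

theorem one_add_sum_Icc_pow_le {R : Type*} [CommSemiring R] [PartialOrder R]
    [IsOrderedRing R] {x : R} (hx : 0 ≤ x) (n : ℕ) : 1 + ∑ j ∈ Icc 1 n, x ^ j ≤ (1 + x) ^ n := by
  induction n with
  | zero => simp
  | succ n ih =>
    have hxn : x ^ n ≤ (1 + x) ^ n := pow_le_pow_left₀ hx (le_add_of_nonneg_left zero_le_one) n
    calc 1 + ∑ j ∈ Icc 1 (n + 1), x ^ j = (1 + ∑ j ∈ Icc 1 n, x ^ j) + x * x ^ n := by
          rw [sum_Icc_succ_top (by omega), pow_succ']; ring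
      _ ≤ (1 + x) ^ n + x * (1 + x) ^ n := by gcongr
      _ = (1 + x) ^ (n + 1) := by ring

theorem sum_Icc_one_add_pow_lt_pow {R : Type*} [CommRing R] [LinearOrder R]
    [IsStrictOrderedRing R] {p : R} (hp : 2 ≤ p) (n : ℕ) :
    ∑ j ∈ Icc 1 n, (1 + p) ^ j < p ^ (2 * n) :=
  calc ∑ j ∈ Icc 1 n, (1 + p) ^ j < 1 + ∑ j ∈ Icc 1 n, (1 + p) ^ j := lt_one_add _
    _ ≤ (1 + (1 + p)) ^ n := one_add_sum_Icc_pow_le (by linarith) n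
    _ ≤ (p ^ 2) ^ n := by gcongr; nlinarith
    _ = p ^ (2 * n) := by rw [pow_mul]

section RootBound

variable {𝕜 : Type*} [NormedField 𝕜]

theorem norm_sum_Icc_sub_pow_le (a z : 𝕜) (n : ℕ) (hz : 1 ≤ ‖z‖) :
    ‖∑ j ∈ Icc 1 n, (z - a) ^ j‖ ≤ (∑ j ∈ Icc 1 n, (1 + ‖a‖) ^ j) * ‖z‖ ^ n := by
  rw [sum_mul]
  refine (norm_sum_le _ _).trans (sum_le_sum fun j hj => ?_)
  have hza : ‖z - a‖ ≤ (1 + ‖a‖) * ‖z‖ := by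
    nlinarith [norm_sub_le z a, norm_nonneg a]
  calc ‖(z - a) ^ j‖ ≤ ((1 + ‖a‖) * ‖z‖) ^ j := by rw [norm_pow]; gcongr
    _ = (1 + ‖a‖) ^ j * ‖z‖ ^ j := mul_pow _ _ _
    _ ≤ (1 + ‖a‖) ^ j * ‖z‖ ^ n := by gcongr; exact (mem_Icc.mp hj).2

theorem norm_lt_one_of_sum_Icc_sub_pow_add_mul_pow_eq_zero {a c z : 𝕜} {n : ℕ}
    (hc : ∑ j ∈ Icc 1 n, (1 + ‖a‖) ^ j < ‖c‖)
    (hz : ∑ j ∈ Icc 1 n, (z - a) ^ j + c * z ^ (n + 1) = 0) : ‖z‖ < 1 := by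
  by_contra! h
  have hbound := norm_sum_Icc_sub_pow_le a z n h
  rw [eq_neg_of_add_eq_zero_left hz, norm_neg, norm_mul, norm_pow] at hbound
  have hzn : 0 < ‖z‖ ^ n := pow_pos (zero_lt_one.trans_le h) n
  have : ‖c‖ * ‖z‖ ^ n ≤ ‖c‖ * ‖z‖ ^ (n + 1) := by gcongr; exact n.le_succ
  linarith [mul_lt_mul_of_pos_right hc hzn]

end RootBound

theorem Int.abs_le_of_not_dvd_of_dvd_pow_mul {p d n : ℕ} {x : ℤ} (hp : p.Prime)
    (hd : 0 < d) (hx : ¬ (p : ℤ) ∣ x) (h : x ∣ p ^ n * d) : |x| ≤ d := by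
  have hcop : IsCoprime x ((p : ℤ) ^ n) :=
    ((Nat.prime_iff_prime_int.mp hp).coprime_iff_not_dvd.mpr hx).symm.pow_right
  exact Int.le_of_dvd (by exact_mod_cast hd) ((abs_dvd x d).mpr (hcop.dvd_of_dvd_mul_left h))

namespace Polynomial

theorem norm_eval_eq_norm_leadingCoeff_mul_prod_roots (q : ℂ[X]) (x : ℂ) :
    ‖q.eval x‖ = ‖q.leadingCoeff‖ * (q.roots.map fun z => ‖x - z‖).prod := by
  rw [(IsAlgClosed.splits q).eval_eq_prod_roots, norm_mul]
  congr 1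
  exact (map_multiset_prod (normHom : ℂ →*₀ ℝ) _).trans (by rw [Multiset.map_map]; rfl)

section RootsInUnitDisc

variable {q : ℂ[X]}

theorem norm_eval_zero_lt_norm_leadingCoeff (hq : 0 < q.natDegree)
    (hroots : ∀ z ∈ q.roots, ‖z‖ < 1) : ‖q.eval 0‖ < ‖q.leadingCoeff‖ := by
  have hq0 : q ≠ 0 := ne_zero_of_natDegree_gt hq
  obtain ⟨z, hz⟩ : ∃ z, z ∈ q.roots := Multiset.card_pos_iff_exists_mem.mp
    (IsAlgClosed.card_roots_eq_natDegree (k := ℂ) ▸ hq)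
  obtain ⟨t, ht⟩ := Multiset.exists_cons_of_mem hz
  have ht1 : (t.map fun z => ‖0 - z‖).prod ≤ 1 := by
    simpa using Multiset.prod_map_le_prod_map₀ _ (fun _ => (1 : ℝ)) (fun _ _ => norm_nonneg _)
      fun y hy => by simpa using (hroots y (ht ▸ Multiset.mem_cons_of_mem hy)).le
  have hprod : (q.roots.map fun z => ‖0 - z‖).prod < 1 := by
    rw [ht, Multiset.map_cons, Multiset.prod_cons, zero_sub, norm_neg]
    calc ‖z‖ * (t.map fun z => ‖0 - z‖).prod ≤ ‖z‖ * 1 := by gcongr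
      _ < 1 := by simpa using hroots z hz
  rw [norm_eval_eq_norm_leadingCoeff_mul_prod_roots]
  exact mul_lt_of_lt_one_right (norm_pos_iff.mpr (leadingCoeff_ne_zero.mpr hq0)) hprod

theorem norm_leadingCoeff_mul_lt_norm_eval (hq : 0 < q.natDegree)
    (hroots : ∀ z ∈ q.roots, ‖z‖ < 1) {x : ℂ} (hx : 1 < ‖x‖) :
    ‖q.leadingCoeff‖ * (‖x‖ - 1) ^ q.natDegree < ‖q.eval x‖ := by
  have hq0 : q ≠ 0 := ne_zero_of_natDegree_gt hq
  have hroots0 : q.roots ≠ 0 := by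
    rw [← Multiset.card_pos, IsAlgClosed.card_roots_eq_natDegree]; exact hq
  have hprod : (‖x‖ - 1) ^ q.natDegree < (q.roots.map fun z => ‖x - z‖).prod := by
    rw [← IsAlgClosed.card_roots_eq_natDegree, ← Multiset.prod_replicate, ← Multiset.map_const']
    refine Multiset.prod_map_lt_prod_map hroots0 _ _ (fun _ _ => by linarith) fun z hz => ?_
    linarith [norm_sub_norm_le x z, hroots z hz]
  rw [norm_eval_eq_norm_leadingCoeff_mul_prod_roots]
  exact mul_lt_mul_of_pos_left hprod (norm_pos_iff.mpr (leadingCoeff_ne_zero.mpr hq0))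

end RootsInUnitDisc

section IntPolynomial

variable {g : ℤ[X]}

theorem roots_map_intCast_norm_lt_one (hroots : ∀ z : ℂ, aeval z g = 0 → ‖z‖ < 1) :
    ∀ z ∈ (g.map (Int.castRingHom ℂ)).roots, ‖z‖ < 1 := fun z hz =>
  hroots z (by rw [aeval_def, eval₂_eq_eval_map]; exact (mem_roots'.mp hz).2)

theorem abs_eval_zero_lt_abs_leadingCoeff (hg : 0 < g.natDegree)
    (hroots : ∀ z : ℂ, aeval z g = 0 → ‖z‖ < 1) : |g.eval 0| < |g.leadingCoeff| := by
  have hinj : Function.Injective (Int.castRingHom ℂ) := Int.cast_injective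
  have := norm_eval_zero_lt_norm_leadingCoeff
    (by rwa [natDegree_map_eq_of_injective hinj]) (roots_map_intCast_norm_lt_one hroots)
  rw [leadingCoeff_map_of_injective hinj, ← Int.cast_zero, eval_intCast_map] at this
  simp only [eq_intCast, Complex.norm_intCast] at this
  exact_mod_cast this

theorem abs_leadingCoeff_mul_lt_abs_eval (hg : 0 < g.natDegree)
    (hroots : ∀ z : ℂ, aeval z g = 0 → ‖z‖ < 1) {x : ℤ} (hx : 1 < |x|) :
    |g.leadingCoeff| * (|x| - 1) ^ g.natDegree < |g.eval x| := by
  have hinj : Function.Injective (Int.castRingHom ℂ) := Int.cast_injective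
  have := norm_leadingCoeff_mul_lt_norm_eval (x := x)
    (by rwa [natDegree_map_eq_of_injective hinj]) (roots_map_intCast_norm_lt_one hroots)
    (by rw [Complex.norm_intCast]; exact_mod_cast hx)
  rw [leadingCoeff_map_of_injective hinj, natDegree_map_eq_of_injective hinj,
    eval_intCast_map] at this
  simp only [eq_intCast, Complex.norm_intCast] at this
  exact_mod_cast this

end IntPolynomial

theorem prime_dvd_leadingCoeff_of_dvd {p d N M : ℕ} {F g : ℤ[X]} (hp : p.Prime) (hd : 0 < d)
    (hdp : d < p) (hroots : ∀ z : ℂ, aeval z F = 0 → ‖z‖ < 1) (hF0 : F.eval 0 ≠ 0)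
    (hlc : F.leadingCoeff ∣ p ^ N * d) (hFp : F.eval (p : ℤ) ∣ p ^ M * d)
    (hgF : g ∣ F) (hg : 0 < g.natDegree) : (p : ℤ) ∣ g.leadingCoeff := by
  by_contra hlcg
  have hgroots : ∀ z : ℂ, aeval z g = 0 → ‖z‖ < 1 := fun z hz => by
    obtain ⟨h, rfl⟩ := hgF
    exact hroots z (by rw [map_mul, hz, zero_mul])
  have hlcg_le : |g.leadingCoeff| ≤ d :=
    Int.abs_le_of_not_dvd_of_dvd_pow_mul hp hd hlcg ((leadingCoeff_dvd_leadingCoeff hgF).trans hlc)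
  have hg0 : ¬ (p : ℤ) ∣ g.eval 0 := fun h =>
    ne_zero_of_dvd_ne_zero hF0 (eval_dvd hgF) <| Int.eq_zero_of_abs_lt_dvd h <| by
      linarith [abs_eval_zero_lt_abs_leadingCoeff hg hgroots]
  have hgp : ¬ (p : ℤ) ∣ g.eval p := fun h =>
    hg0 <| (dvd_sub_right h).mp (by simpa using sub_dvd_eval_sub (p : ℤ) 0 g)
  have hgp_le : |g.eval (p : ℤ)| ≤ d :=
    Int.abs_le_of_not_dvd_of_dvd_pow_mul hp hd hgp ((eval_dvd hgF).trans hFp)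
  have hp1 : (1 : ℤ) < |(p : ℤ)| := by
    rw [Nat.abs_cast]; exact_mod_cast hp.one_lt
  have hlcg1 : 1 ≤ |g.leadingCoeff| :=
    Int.one_le_abs (leadingCoeff_ne_zero.mpr (ne_zero_of_natDegree_gt hg))
  refine lt_irrefl (d : ℤ) ?_
  calc (d : ℤ) ≤ |(p : ℤ)| - 1 := by rw [Nat.abs_cast]; omega
    _ ≤ (|(p : ℤ)| - 1) ^ g.natDegree := le_self_pow₀ (by omega) hg.ne'
    _ ≤ |g.leadingCoeff| * (|(p : ℤ)| - 1) ^ g.natDegree :=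
        le_mul_of_one_le_left (pow_nonneg (by omega) _) hlcg1
    _ < |g.eval (p : ℤ)| := abs_leadingCoeff_mul_lt_abs_eval hg hgroots hp1
    _ ≤ d := hgp_le

theorem map_leadingCoeff_ne_zero_or_of_natDegree_le_natDegree_map_add_one {R S : Type*}
    [CommRing R] [IsDomain R] [CommRing S] [IsDomain S] {f : R →+* S} {F g h : R[X]}
    (hF : F = g * h) (hmap : F.map f ≠ 0) (hdeg : F.natDegree ≤ (F.map f).natDegree + 1) :
    f g.leadingCoeff ≠ 0 ∨ f h.leadingCoeff ≠ 0 := by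
  by_contra! ⟨hg, hh⟩
  rw [hF, Polynomial.map_mul] at hmap
  have hg0 : g.map f ≠ 0 := left_ne_zero_of_mul hmap
  have hh0 : h.map f ≠ 0 := right_ne_zero_of_mul hmap
  have hFdeg : F.natDegree = g.natDegree + h.natDegree :=
    hF ▸ natDegree_mul (fun hg' => by simp [hg'] at hg0) (fun hh' => by simp [hh'] at hh0)
  have hFmap : (F.map f).natDegree = (g.map f).natDegree + (h.map f).natDegree := by
    rw [hF, Polynomial.map_mul, natDegree_mul hg0 hh0]
  have := natDegree_map_lt hg hg0
  have := natDegree_map_lt hh hh0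
  omega

theorem isPrimitive_of_coeff_eq_one {R : Type*} [CommSemiring R] {F : R[X]} {n : ℕ}
    (h : F.coeff n = 1) : F.IsPrimitive := fun r hr =>
  isUnit_of_dvd_one (h ▸ (C_dvd_iff_dvd_coeff r F).mp hr n)

theorem IsPrimitive.isUnit_of_dvd_of_natDegree_eq_zero {R : Type*} [CommSemiring R]
    {F g : R[X]} (hF : F.IsPrimitive) (hgF : g ∣ F) (hg : g.natDegree = 0) : IsUnit g := by
  rw [eq_C_of_natDegree_eq_zero hg] at hgF ⊢
  exact isUnit_C.mpr (hF _ hgF)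

theorem irreducible_of_prime_dvd_leadingCoeff_of_dvd {p : ℕ} [Fact p.Prime] {F : ℤ[X]}
    (hprim : F.IsPrimitive) (hmap : F.map (Int.castRingHom (ZMod p)) ≠ 0)
    (hdeg : F.natDegree = (F.map (Int.castRingHom (ZMod p))).natDegree + 1)
    (hdvd : ∀ g, g ∣ F → 0 < g.natDegree → (p : ℤ) ∣ g.leadingCoeff) : Irreducible F := by
  refine ⟨fun hu => by simp [natDegree_eq_zero_of_isUnit hu] at hdeg, fun g h hF => ?_⟩
  by_contra! ⟨hg, hh⟩
  have hgF : g ∣ F := hF ▸ dvd_mul_right g h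
  have hhF : h ∣ F := hF ▸ dvd_mul_left h g
  have hg0 : 0 < g.natDegree :=
    Nat.pos_of_ne_zero fun h0 => hg (hprim.isUnit_of_dvd_of_natDegree_eq_zero hgF h0)
  have hh0 : 0 < h.natDegree :=
    Nat.pos_of_ne_zero fun h0 => hh (hprim.isUnit_of_dvd_of_natDegree_eq_zero hhF h0)
  rcases map_leadingCoeff_ne_zero_or_of_natDegree_le_natDegree_map_add_one hF hmap hdeg.le with
    hlc | hlc
  · exact hlc ((ZMod.intCast_zmod_eq_zero_iff_dvd _ p).mpr (hdvd g hgF hg0))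
  · exact hlc ((ZMod.intCast_zmod_eq_zero_iff_dvd _ p).mpr (hdvd h hhF hh0))

section ShiftedGeomSum

variable {R : Type*} [CommRing R] {a c : R} {n : ℕ}

theorem eval_zero_sum_Icc_X_sub_C_pow_add_C_mul_X_pow :
    (∑ j ∈ Icc 1 n, (X - C a) ^ j + C c * X ^ (n + 1)).eval 0 = ∑ j ∈ Icc 1 n, (-a) ^ j := by
  simp [eval_finsetSum]

theorem eval_self_sum_Icc_X_sub_C_pow_add_C_mul_X_pow :
    (∑ j ∈ Icc 1 n, (X - C a) ^ j + C c * X ^ (n + 1)).eval a = c * a ^ (n + 1) := by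
  have hsum : ∑ j ∈ Icc 1 n, (0 : R) ^ j = 0 :=
    sum_eq_zero fun j hj => zero_pow (Nat.one_le_iff_ne_zero.mp (mem_Icc.mp hj).1)
  simp [eval_finsetSum, hsum]

theorem map_sum_Icc_X_sub_C_pow_add_C_mul_X_pow {S : Type*} [CommRing S] (f : R →+* S)
    (hc : f c = 0) : (∑ j ∈ Icc 1 n, (X - C a) ^ j + C c * X ^ (n + 1)).map f =
      ∑ j ∈ Icc 1 n, (X - C (f a)) ^ j := by
  simp [Polynomial.map_sum, hc]

variable [Nontrivial R] (a)

theorem natDegree_X_sub_C_pow (n : ℕ) : ((X - C a) ^ n).natDegree = n := by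
  rw [(monic_X_sub_C a).natDegree_pow, natDegree_X_sub_C, mul_one]

theorem natDegree_sum_Icc_X_sub_C_pow (n : ℕ) :
    (∑ j ∈ Icc 1 n, (X - C a) ^ j).natDegree = n := by
  induction n with
  | zero => simp
  | succ n ih =>
    rw [sum_Icc_succ_top (by omega), natDegree_add_eq_right_of_natDegree_lt] <;>
      rw [natDegree_X_sub_C_pow]
    omega

theorem monic_sum_Icc_X_sub_C_pow {n : ℕ} (hn : n ≠ 0) :
    (∑ j ∈ Icc 1 n, (X - C a) ^ j).Monic := by
  obtain ⟨n, rfl⟩ := Nat.exists_eq_succ_of_ne_zero hn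
  rw [sum_Icc_succ_top (by omega)]
  refine ((monic_X_sub_C a).pow _).add_of_right (degree_lt_degree ?_)
  rw [natDegree_sum_Icc_X_sub_C_pow, natDegree_X_sub_C_pow]
  omega

variable {a}

theorem natDegree_sum_Icc_X_sub_C_pow_add_C_mul_X_pow (hc : c ≠ 0) :
    (∑ j ∈ Icc 1 n, (X - C a) ^ j + C c * X ^ (n + 1)).natDegree = n + 1 := by
  rw [natDegree_add_eq_right_of_natDegree_lt] <;>
    rw [natDegree_C_mul_X_pow _ _ hc]
  rw [natDegree_sum_Icc_X_sub_C_pow]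
  omega

theorem leadingCoeff_sum_Icc_X_sub_C_pow_add_C_mul_X_pow (hc : c ≠ 0) :
    (∑ j ∈ Icc 1 n, (X - C a) ^ j + C c * X ^ (n + 1)).leadingCoeff = c := by
  rw [leadingCoeff_add_of_degree_lt, leadingCoeff_C_mul_X_pow]
  refine degree_lt_degree ?_
  rw [natDegree_C_mul_X_pow _ _ hc, natDegree_sum_Icc_X_sub_C_pow]
  omega

theorem coeff_sum_Icc_X_sub_C_pow_add_C_mul_X_pow (hn : n ≠ 0) :
    (∑ j ∈ Icc 1 n, (X - C a) ^ j + C c * X ^ (n + 1)).coeff n = 1 := by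
  rw [coeff_add, coeff_C_mul_X_pow, if_neg (by omega), add_zero]
  simpa only [natDegree_sum_Icc_X_sub_C_pow] using
    (monic_sum_Icc_X_sub_C_pow a hn).coeff_natDegree

end ShiftedGeomSum

theorem norm_lt_one_of_aeval_sum_Icc_X_sub_C_pow_add_C_mul_X_pow_eq_zero {a c : ℤ} {n : ℕ}
    (hc : ∑ j ∈ Icc 1 n, (1 + |a|) ^ j < |c|) {z : ℂ}
    (hz : aeval z (∑ j ∈ Icc 1 n, (X - C a) ^ j + C c * X ^ (n + 1)) = 0) : ‖z‖ < 1 := by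
  refine norm_lt_one_of_sum_Icc_sub_pow_add_mul_pow_eq_zero (a := (a : ℂ)) (c := (c : ℂ)) ?_
    (by simpa using hz)
  simp only [Complex.norm_intCast]
  exact_mod_cast hc

end Polynomial

open Polynomial in
theorem stmt_17 (k m : ℕ) (hm : 2 ≤ m) (hk : m ≤ k)
    (p : ℕ) (hp : p.Prime) (d : ℕ) (hd : 1 ≤ d) (hdp : 1 + d ≤ p)
    (ε : ℤ) (hε : ε = 1 ∨ ε = -1) :
    Irreducible
      ((∑ j ∈ Finset.Icc 1 (m - 1), (X - C (p : ℤ)) ^ j)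
        + C (ε * (p : ℤ) ^ (2 * k - 2) * d) * X ^ m) := by
  have : Fact p.Prime := ⟨hp⟩
  obtain ⟨n, rfl⟩ : ∃ n, m = n + 1 := ⟨m - 1, by omega⟩
  rw [Nat.add_sub_cancel]
  have hn : n ≠ 0 := by omega
  set N := 2 * k - 2
  set c : ℤ := ε * p ^ N * d
  have hcε : c * ε = p ^ N * d := by rcases hε with rfl | rfl <;> ring
  have habs : |c| = p ^ N * d := by rcases hε with rfl | rfl <;> simp [c, abs_mul]
  have hc0 : c ≠ 0 := abs_pos.mp (by rw [habs]; have := hp.pos; positivity)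
  have hbound : ∑ j ∈ Icc 1 n, (1 + |(p : ℤ)|) ^ j < |c| := by
    rw [habs, Nat.abs_cast]
    calc ∑ j ∈ Icc 1 n, (1 + (p : ℤ)) ^ j < p ^ (2 * n) :=
          sum_Icc_one_add_pow_lt_pow (by exact_mod_cast hp.two_le) n
      _ ≤ p ^ N := pow_le_pow_right₀ (by exact_mod_cast hp.one_le) (by omega)
      _ ≤ p ^ N * d := le_mul_of_one_le_right (by positivity) (by exact_mod_cast hd)
  have hmap := map_sum_Icc_X_sub_C_pow_add_C_mul_X_pow (a := (p : ℤ)) (n := n)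
    (Int.castRingHom (ZMod p)) ((ZMod.intCast_zmod_eq_zero_iff_dvd c p).mpr
      (((dvd_pow_self _ (by omega : N ≠ 0)).mul_left ε).mul_right d))
  refine irreducible_of_prime_dvd_leadingCoeff_of_dvd
    (isPrimitive_of_coeff_eq_one (coeff_sum_Icc_X_sub_C_pow_add_C_mul_X_pow hn))
    (hmap ▸ (monic_sum_Icc_X_sub_C_pow _ hn).ne_zero)
    (by rw [hmap, natDegree_sum_Icc_X_sub_C_pow, natDegree_sum_Icc_X_sub_C_pow_add_C_mul_X_pow hc0])
    fun g hg hgdeg => prime_dvd_leadingCoeff_of_dvd (N := N) (M := N + (n + 1)) hp hd (by omega)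
      (fun z => norm_lt_one_of_aeval_sum_Icc_X_sub_C_pow_add_C_mul_X_pow_eq_zero hbound) ?_ ?_ ?_
      hg hgdeg
  · rw [eval_zero_sum_Icc_X_sub_C_pow_add_C_mul_X_pow]
    exact sum_Icc_pow_ne_zero (by simp [hp.ne_zero]) (by simp [hp.ne_one]) hn
  · exact ⟨ε, by rw [leadingCoeff_sum_Icc_X_sub_C_pow_add_C_mul_X_pow hc0, hcε]⟩
  · rw [eval_self_sum_Icc_X_sub_C_pow_add_C_mul_X_pow]
    exact ⟨ε, by linear_combination -(p : ℤ) ^ (n + 1) * hcε⟩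
end

section
/- Let m ≥ 3, 2 ≤ j ≤ m - 1, p prime, and 1 ≤ d ≤ p - 1. Then the polynomial F_5 = (p^m - p) + z ± (p^{1+2m+j} d) z^j - z^m is irreducible in ℤ[z]. -/
/-!
Every complex root `ρ` of `F₅` has `‖ρ‖ < 1` or `‖ρ‖ > p²`: for `1 ≤ ‖ρ‖ ≤ p²` the term
`p ^ (1 + 2m + j) * d * ρ ^ j` outweighs all the others. Since `p ∥ F₅(0) = p ^ m - p`, a
factorization of `-F₅` into nonconstant monic factors has a factor `b` with `p ∤ b(0)`. As
`F₅(p) = ±d p ^ (1 + 2m + 2j)` and `b(p) ≡ b(0) mod p`, `b(p)` divides `d`, so `|b(p)| < p`. On the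
other hand `1 ≤ |b(0)|` is the product of the norms of the roots of `b`, so `b` has a root with
`‖ρ‖ > p²`, while every root of `b` is at distance at least `1` from `p`; hence
`|b(p)| = ∏ ‖p - ρ‖ > p² - p ≥ p`.
-/

open Polynomial

namespace Polynomial

theorem aeval_intCast_eq_eval {A : Type*} [Ring A] (f : ℤ[X]) (n : ℤ) :
    aeval (n : A) f = ((f.eval n : ℤ) : A) := by
  simpa using aeval_algebraMap_apply_eq_algebraMap_eval (A := A) n f

namespace Monic

variable {f : ℤ[X]}

theorem norm_aeval_eq_prod_norm_sub_aroots (hf : f.Monic) (x : ℂ) :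
    ‖aeval x f‖ = ((f.aroots ℂ).map fun ρ => ‖x - ρ‖).prod := by
  rw [(IsAlgClosed.splits _).aeval_eq_prod_aroots_of_monic hf]
  simpa [Multiset.map_map] using
    map_multiset_prod (normHom : ℂ →*₀ ℝ) ((f.aroots ℂ).map (x - ·))

theorem exists_mem_aroots_one_le_norm (hf : f.Monic) (hdeg : f.natDegree ≠ 0)
    (h0 : f.eval 0 ≠ 0) : ∃ ρ ∈ f.aroots ℂ, 1 ≤ ‖ρ‖ := by
  by_contra! hsmall
  have hne : f.aroots ℂ ≠ 0 := by
    rw [← Multiset.card_pos, IsAlgClosed.card_aroots_eq_natDegree]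
    omega
  have hpos : ∀ ρ ∈ f.aroots ℂ, 0 < ‖0 - ρ‖ := by
    intro ρ hρ
    rw [zero_sub, norm_neg, norm_pos_iff]
    rintro rfl
    have := (mem_aroots.1 hρ).2
    rw [← Int.cast_zero, aeval_intCast_eq_eval] at this
    exact h0 (by exact_mod_cast this)
  have hlt : ‖aeval (0 : ℂ) f‖ < 1 :=
    calc ‖aeval (0 : ℂ) f‖ = ((f.aroots ℂ).map fun ρ => ‖0 - ρ‖).prod :=
          hf.norm_aeval_eq_prod_norm_sub_aroots 0
      _ < ((f.aroots ℂ).map fun _ => (1 : ℝ)).prod :=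
          Multiset.prod_map_lt_prod_map hne _ _ hpos (by simpa using hsmall)
      _ = 1 := by simp
  rw [← Int.cast_zero, aeval_intCast_eq_eval, Complex.norm_intCast] at hlt
  have : (1 : ℝ) ≤ |((f.eval 0 : ℤ) : ℝ)| := by exact_mod_cast Int.one_le_abs h0
  linarith

theorem norm_sub_le_norm_aeval (hf : f.Monic) {x ρ₀ : ℂ} (hρ₀ : ρ₀ ∈ f.aroots ℂ)
    (h : ∀ ρ ∈ f.aroots ℂ, 1 ≤ ‖x - ρ‖) : ‖x - ρ₀‖ ≤ ‖aeval x f‖ := by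
  rw [hf.norm_aeval_eq_prod_norm_sub_aroots, ← Multiset.cons_erase hρ₀, Multiset.map_cons,
    Multiset.prod_cons]
  exact le_mul_of_one_le_right (norm_nonneg _)
    (Multiset.one_le_prod_map fun ρ hρ => h ρ (Multiset.mem_of_mem_erase hρ))

theorem sq_sub_self_lt_abs_eval (hf : f.Monic) (hdeg : f.natDegree ≠ 0) (h0 : f.eval 0 ≠ 0)
    {x : ℤ} (hx : 2 ≤ x) (hroots : ∀ ρ ∈ f.aroots ℂ, ‖ρ‖ < 1 ∨ (x : ℝ) ^ 2 < ‖ρ‖) :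
    (x : ℝ) ^ 2 - x < |((f.eval x : ℤ) : ℝ)| := by
  have hx' : (2 : ℝ) ≤ x := by exact_mod_cast hx
  have hnorm_x : ‖(x : ℂ)‖ = x := by rw [Complex.norm_intCast, abs_of_nonneg (by linarith)]
  obtain ⟨ρ₀, hρ₀, hρ₀_ge⟩ := hf.exists_mem_aroots_one_le_norm hdeg h0
  have hρ₀_big : (x : ℝ) ^ 2 < ‖ρ₀‖ := (hroots ρ₀ hρ₀).resolve_left hρ₀_ge.not_gt
  have hfar : ∀ ρ ∈ f.aroots ℂ, 1 ≤ ‖(x : ℂ) - ρ‖ := by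
    intro ρ hρ
    rcases hroots ρ hρ with hsmall | hbig
    · linarith [norm_sub_norm_le (x : ℂ) ρ]
    · nlinarith [norm_sub_norm_le ρ (x : ℂ), norm_sub_rev ρ (x : ℂ)]
  calc (x : ℝ) ^ 2 - x < ‖ρ₀‖ - ‖(x : ℂ)‖ := by linarith
    _ ≤ ‖(x : ℂ) - ρ₀‖ := norm_sub_rev ρ₀ (x : ℂ) ▸ norm_sub_norm_le _ _
    _ ≤ ‖aeval (x : ℂ) f‖ := hf.norm_sub_le_norm_aeval hρ₀ hfar
    _ = |((f.eval x : ℤ) : ℝ)| := by rw [aeval_intCast_eq_eval, Complex.norm_intCast]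

end Monic

end Polynomial

theorem prime_dvd_eval_zero_of_monic_dvd {p : ℕ} (hp : p.Prime) {g f : ℤ[X]} {c : ℤ} {n : ℕ}
    (hroots : ∀ ρ : ℂ, aeval ρ g = 0 → ‖ρ‖ < 1 ∨ (p : ℝ) ^ 2 < ‖ρ‖)
    (hgp : g.eval (p : ℤ) = c * p ^ n) (hc0 : c ≠ 0) (hcp : c.natAbs < p)
    (hf : f.Monic) (hdeg : f.natDegree ≠ 0) (hfg : f ∣ g) : (p : ℤ) ∣ f.eval 0 := by
  by_contra h0
  have hfp : ¬ (p : ℤ) ∣ f.eval (p : ℤ) := fun h =>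
    h0 ((dvd_sub_right h).mp (by simpa using sub_dvd_eval_sub (p : ℤ) 0 f))
  have hfp_dvd : f.eval (p : ℤ) ∣ c :=
    ((Nat.prime_iff_prime_int.mp hp).coprime_iff_not_dvd.mpr hfp).symm.pow_right
      |>.dvd_of_dvd_mul_right (hgp ▸ eval_dvd hfg)
  have hfp_lt : |((f.eval (p : ℤ) : ℤ) : ℝ)| < p := by
    rw [← Int.cast_abs, Int.abs_eq_natAbs]
    exact_mod_cast (Int.natAbs_le_of_dvd_ne_zero hfp_dvd hc0).trans_lt hcp
  have hp2 : (2 : ℝ) ≤ p := by exact_mod_cast hp.two_le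
  have hfar := hf.sq_sub_self_lt_abs_eval hdeg (fun h => h0 (by rw [h]; exact dvd_zero _))
    (x := p) (by exact_mod_cast hp.two_le)
    fun ρ hρ => hroots ρ (aeval_eq_zero_of_dvd_aeval_eq_zero hfg (mem_aroots.1 hρ).2)
  push_cast at hfar
  nlinarith

theorem not_sq_dvd_pow_sub_self {R : Type*} [CommRing R] [IsDomain R] {p : R} (hp0 : p ≠ 0)
    (hp : ¬ IsUnit p) {m : ℕ} (hm : 2 ≤ m) : ¬ p ^ 2 ∣ p ^ m - p := by
  obtain ⟨k, rfl⟩ : ∃ k, m = k + 2 := ⟨m - 2, by omega⟩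
  rw [show p ^ (k + 2) - p = p * (p * p ^ k - 1) by ring, sq, mul_dvd_mul_iff_left hp0]
  exact fun h => hp (isUnit_of_dvd_one ((dvd_sub_right (dvd_mul_right p _)).mp h))

theorem norm_lt_one_or_sq_lt_norm_of_root {p m j d : ℕ} (hp : 2 ≤ p) (hm : m ≠ 0) (hj : 2 ≤ j)
    (hd : d ≠ 0) {ε ρ : ℂ} (hε : ‖ε‖ = 1)
    (hρ : ρ ^ m - ε * p ^ (1 + 2 * m + j) * d * ρ ^ j - ρ - (p ^ m - p) = 0) :
    ‖ρ‖ < 1 ∨ (p : ℝ) ^ 2 < ‖ρ‖ := by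
  by_contra! hρ_mid
  obtain ⟨h1, h2⟩ := hρ_mid
  have hP : (2 : ℝ) ≤ p := by exact_mod_cast hp
  set r := ‖ρ‖
  set P : ℝ := (p : ℝ)
  have hd1 : (1 : ℝ) ≤ d := by exact_mod_cast Nat.one_le_iff_ne_zero.mpr hd
  have hlhs : ‖ε * p ^ (1 + 2 * m + j) * d * ρ ^ j‖ = P ^ (1 + 2 * m + j) * d * r ^ j := by
    simp [hε, P, r]
  have hrhs : ‖(ρ ^ m - ρ - (p ^ m - p) : ℂ)‖ ≤ r ^ m + r + (P ^ m + P) := by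
    have h := norm_sub_le (ρ ^ m - ρ) ((p : ℂ) ^ m - p)
    have h' := norm_sub_le (ρ ^ m) ρ
    have h'' := norm_sub_le ((p : ℂ) ^ m) (p : ℂ)
    simp only [norm_pow, Complex.norm_natCast] at h h' h''
    linarith
  have hbound : r ^ m + r + (P ^ m + P) < P ^ (1 + 2 * m + j) * d * r ^ j :=
    calc r ^ m + r + (P ^ m + P) ≤ 4 * P ^ (2 * m) := by
          have hrm : r ^ m ≤ P ^ (2 * m) := by
            rw [pow_mul]; exact pow_le_pow_left₀ (by linarith) h2 m
          have hP2 : P ^ 2 ≤ P ^ (2 * m) := pow_le_pow_right₀ (by linarith) (by omega)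
          have hPm : P ^ m ≤ P ^ (2 * m) := pow_le_pow_right₀ (by linarith) (by omega)
          have hP1 : P ^ 1 ≤ P ^ (2 * m) := pow_le_pow_right₀ (by linarith) (by omega)
          linarith
      _ < P ^ 3 * P ^ (2 * m) := by
          have : (8 : ℝ) ≤ P ^ 3 := by nlinarith
          nlinarith [pow_pos (show (0 : ℝ) < P by linarith) (2 * m)]
      _ ≤ P ^ (1 + 2 * m + j) := by
          rw [← pow_add]; exact pow_le_pow_right₀ (by linarith) (by omega)
      _ ≤ P ^ (1 + 2 * m + j) * d * r ^ j := by
          rw [mul_assoc]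
          exact le_mul_of_one_le_right (by positivity)
            (one_le_mul_of_one_le_of_one_le hd1 (one_le_pow₀ h1))
  have heq : ε * p ^ (1 + 2 * m + j) * d * ρ ^ j = ρ ^ m - ρ - (p ^ m - p) := by
    linear_combination -hρ
  rw [heq] at hlhs
  linarith

noncomputable def negF₅ (p m j d : ℕ) (ε : ℤ) : ℤ[X] :=
  X ^ m - C (ε * (p : ℤ) ^ (1 + 2 * m + j) * d) * X ^ j - X - C ((p : ℤ) ^ m - p)

section negF₅

variable {p m j d : ℕ} {ε : ℤ}

theorem monic_negF₅ (hm : 2 ≤ m) (hjm : j < m) : (negF₅ p m j d ε).Monic := by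
  rw [negF₅]
  monicity!
  all_goals (split_ifs <;> omega)

theorem natDegree_negF₅ (hm : 2 ≤ m) (hjm : j < m) : (negF₅ p m j d ε).natDegree = m := by
  rw [negF₅]
  compute_degree!
  all_goals (try split_ifs) <;> omega

theorem eval_zero_negF₅ (hm : m ≠ 0) (hj : j ≠ 0) :
    (negF₅ p m j d ε).eval 0 = -((p : ℤ) ^ m - p) := by
  simp [negF₅, zero_pow hm, zero_pow hj]

theorem eval_natCast_negF₅ :
    (negF₅ p m j d ε).eval (p : ℤ) = -(ε * d) * p ^ (1 + 2 * m + j + j) := by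
  simp only [negF₅, eval_sub, eval_mul, eval_pow, eval_C, eval_X]
  ring

theorem norm_lt_one_or_sq_lt_norm_of_aeval_negF₅ (hp : 2 ≤ p) (hm : m ≠ 0) (hj : 2 ≤ j)
    (hd : d ≠ 0) (hε : ε = 1 ∨ ε = -1) {ρ : ℂ} (hρ : aeval ρ (negF₅ p m j d ε) = 0) :
    ‖ρ‖ < 1 ∨ (p : ℝ) ^ 2 < ‖ρ‖ :=
  norm_lt_one_or_sq_lt_norm_of_root hp hm hj hd (ε := ε)
    (by rcases hε with rfl | rfl <;> simp) (by simpa [negF₅] using hρ)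

end negF₅

open Polynomial in
theorem stmt_18 (m j : ℕ) (hm : 3 ≤ m) (hj : 2 ≤ j) (hjm : j ≤ m - 1)
    (p : ℕ) (hp : p.Prime) (d : ℕ) (hd : 1 ≤ d) (hdp : d ≤ p - 1)
    (ε : ℤ) (hε : ε = 1 ∨ ε = -1) :
    Irreducible
      (C ((p : ℤ) ^ m - p) + X + C (ε * (p : ℤ) ^ (1 + 2 * m + j) * d) * X ^ j
        - X ^ m) := by
  rw [show C ((p : ℤ) ^ m - p) + X + C (ε * (p : ℤ) ^ (1 + 2 * m + j) * d) * X ^ j - X ^ m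
      = -negF₅ p m j d ε by rw [negF₅]; ring, (Associated.refl _).neg_left.irreducible_iff]
  have hc : (-(ε * d)).natAbs = d := by rcases hε with rfl | rfl <;> simp
  have hdvd {f : ℤ[X]} (hf : f.Monic) (hf_deg : f.natDegree ≠ 0) (hfg : f ∣ negF₅ p m j d ε) :
      (p : ℤ) ∣ f.eval 0 :=
    prime_dvd_eval_zero_of_monic_dvd hp
      (fun _ => norm_lt_one_or_sq_lt_norm_of_aeval_negF₅ hp.two_le (by omega) hj (by omega) hε)
      eval_natCast_negF₅ (by rw [← Int.natAbs_ne_zero, hc]; omega) (by rw [hc]; omega)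
      hf hf_deg hfg
  have hne_one : negF₅ p m j d ε ≠ 1 :=
    ne_of_apply_ne natDegree (by rw [natDegree_negF₅ (by omega) (by omega), natDegree_one]; omega)
  refine (monic_negF₅ (by omega) (by omega)).irreducible_iff_natDegree.2
    ⟨hne_one, fun a b ha hb hab => ?_⟩
  by_contra! hdeg
  have hsq : (p : ℤ) ^ 2 ∣ (negF₅ p m j d ε).eval 0 := by
    rw [← hab, eval_mul, sq]
    exact mul_dvd_mul (hdvd ha hdeg.1 (hab ▸ dvd_mul_right a b))
      (hdvd hb hdeg.2 (hab ▸ dvd_mul_left b a))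
  rw [eval_zero_negF₅ (by omega) (by omega), dvd_neg] at hsq
  have hpZ := Nat.prime_iff_prime_int.mp hp
  exact not_sq_dvd_pow_sub_self hpZ.ne_zero hpZ.not_isUnit (by omega) hsq
end
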